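/- arXiv:2604.03101 — 4 statements merged into one kernel-verified Lean document; each statement's English description precedes it below -/
import Mathlib

section
/- Let Γ(R) be the zero-divisor graph of R = 𝔽_p[x]/(x^{2b}) with b ≥ 1. The clique number of Γ(R) equals p^b − 1. -/
open Polynomial

noncomputable section

/-- The truncated polynomial ring `𝔽_p[x]/(x^c)`. -/
abbrev TPR (p c : ℕ) : Type := AdjoinRoot (X ^ c : (ZMod p)[X])

instance (p c : ℕ) [Fact p.Prime] : Finite (TPR p c) := by
  have hb : PowerBasis (ZMod p) (TPR p c) :=
    AdjoinRoot.powerBasis (pow_ne_zero c Polynomial.X_ne_zero)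
  have : Module.Finite (ZMod p) (TPR p c) := Module.Finite.of_basis hb.basis
  exact Module.finite_of_finite (ZMod p)

/-- The canonical representative (the unique representative of degree `< c`)
of an element of `𝔽_p[x]/(x^c)`. -/
def canon {p c : ℕ} (f : TPR p c) : (ZMod p)[X] :=
  Function.surjInv (AdjoinRoot.mk_surjective (g := (X ^ c : (ZMod p)[X]))) f %ₘ X ^ c

/-- The minimal degree: the least exponent with nonzero coefficient in the
canonical representative. -/
def mindeg {p c : ℕ} (f : TPR p c) : ℕ := (canon f).natTrailingDegree

/-- The set of nonzero zero-divisors of `𝔽_p[x]/(x^c)`. -/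
def zd (p c : ℕ) : Set (TPR p c) := {f | f ≠ 0 ∧ ∃ g, g ≠ 0 ∧ f * g = 0}

/-- The zero-divisor graph of `𝔽_p[x]/(x^c)`: vertices are the nonzero
zero-divisors, and `f ~ g` iff `f ≠ g` and `f * g = 0`. -/
def zdGraph (p c : ℕ) : SimpleGraph (zd p c) where
  Adj a b := a ≠ b ∧ (a : TPR p c) * (b : TPR p c) = 0
  symm := ⟨fun a b h => ⟨h.1.symm, by rw [mul_comm]; exact h.2⟩⟩
  loopless := ⟨fun a h => h.1 rfl⟩

/-! Write `ε` for the class of `X` in `K[X]/(X^c)`. An element is killed by `ε^k` exactly when it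
is a multiple `ε^(c-k) * F` with `deg F < k`, so there are `|K|^k` of them. For `c = 2b` the nonzero
multiples of `ε^b` square to zero pairwise, giving a clique of size `p^b - 1`. Conversely, the
`X`-adic valuations of representatives add up under multiplication, so two vertices of valuation
`< b` are never adjacent. If a clique has a vertex of valuation `< b`, all its other vertices have
valuation `> b` and the clique has at most `p^(b-1) < p^b` elements; otherwise it lies among the
nonzero multiples of `ε^b`. -/

open AdjoinRoot

theorem Polynomial.X_pow_dvd_iff_le_natTrailingDegree {R : Type*} [Semiring R] {F : R[X]}
    (hF : F ≠ 0) {n : ℕ} : X ^ n ∣ F ↔ n ≤ F.natTrailingDegree := by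
  rw [X_pow_dvd_iff]
  exact ⟨le_natTrailingDegree hF,
    fun h d hd => coeff_eq_zero_of_lt_natTrailingDegree (hd.trans_le h)⟩

namespace AdjoinRoot

variable {K : Type*} [CommRing K] {c : ℕ}

theorem root_pow_mul_mk (k : ℕ) (F : K[X]) :
    root (X ^ c : K[X]) ^ k * mk (X ^ c) F = mk (X ^ c) (X ^ k * F) := by
  rw [← mk_X, ← map_pow, ← map_mul]

theorem mk_X_pow_ne_zero_iff {F : K[X]} :
    mk (X ^ c) F ≠ 0 ↔ F ≠ 0 ∧ F.natTrailingDegree < c := by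
  rw [Ne, mk_eq_zero]
  by_cases hF : F = 0
  · simp [hF]
  · simp [hF, X_pow_dvd_iff_le_natTrailingDegree hF]

variable (K c) in
def annRootPow (k : ℕ) : Set (AdjoinRoot (X ^ c : K[X])) :=
  {f | root (X ^ c : K[X]) ^ k * f = 0}

theorem zero_mem_annRootPow (k : ℕ) : 0 ∈ annRootPow K c k := mul_zero _

variable [IsDomain K]

theorem root_pow_mul_mk_ne_zero_iff {k : ℕ} {F : K[X]} :
    root (X ^ c : K[X]) ^ k * mk (X ^ c) F ≠ 0 ↔ F ≠ 0 ∧ F.natTrailingDegree + k < c := by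
  rw [root_pow_mul_mk, mk_X_pow_ne_zero_iff, mul_comm, mul_ne_zero_iff]
  by_cases hF : F = 0
  · simp [hF]
  · simp [hF, natTrailingDegree_mul_X_pow hF]

theorem lt_of_root_pow_mul_ne_zero {k : ℕ} {f : AdjoinRoot (X ^ c : K[X])}
    (hf : root (X ^ c : K[X]) ^ k * f ≠ 0) : k < c := by
  induction f using AdjoinRoot.induction_on with
  | ih F => have := (root_pow_mul_mk_ne_zero_iff.1 hf).2; omega

theorem mul_ne_zero_of_root_pow_mul_ne_zero {j k : ℕ} {f g : AdjoinRoot (X ^ c : K[X])}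
    (hf : root (X ^ c : K[X]) ^ j * f ≠ 0) (hg : root (X ^ c : K[X]) ^ k * g ≠ 0)
    (hc : c ≤ j + k + 1) : f * g ≠ 0 := by
  induction f using AdjoinRoot.induction_on with | ih F => ?_
  induction g using AdjoinRoot.induction_on with | ih G => ?_
  obtain ⟨hF, hFc⟩ := root_pow_mul_mk_ne_zero_iff.1 hf
  obtain ⟨hG, hGc⟩ := root_pow_mul_mk_ne_zero_iff.1 hg
  rw [← map_mul, mk_X_pow_ne_zero_iff, natTrailingDegree_mul hF hG]
  exact ⟨mul_ne_zero hF hG, by omega⟩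

theorem annRootPow_eq_image {k : ℕ} (hk : k ≤ c) :
    annRootPow K c k = (fun F => mk (X ^ c) (X ^ (c - k) * F)) '' degreeLT K k := by
  refine Set.Subset.antisymm (fun f hF => ?_) ?_
  · induction f using AdjoinRoot.induction_on with | ih F => ?_
    change root _ ^ k * mk _ F = 0 at hF
    rw [root_pow_mul_mk, mk_eq_zero] at hF
    obtain ⟨G, rfl⟩ : X ^ (c - k) ∣ F := by
      rwa [← Nat.add_sub_cancel' hk, pow_add,
        mul_dvd_mul_iff_left (pow_ne_zero _ X_ne_zero)] at hF
    refine ⟨G %ₘ X ^ k, mem_degreeLT.2 ?_, mk_eq_mk.2 ⟨-(G /ₘ X ^ k), ?_⟩⟩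
    · simpa using degree_modByMonic_lt G (monic_X_pow (R := K) k)
    · rw [modByMonic_eq_sub_mul_div G (X ^ k), ← Nat.sub_add_cancel hk, pow_add,
        Nat.add_sub_cancel]
      ring
  · rintro _ ⟨G, -, rfl⟩
    change root _ ^ k * _ = 0
    rw [root_pow_mul_mk, mk_eq_zero, ← mul_assoc, ← pow_add, Nat.add_sub_cancel' hk]
    exact dvd_mul_right _ _

theorem injOn_mk_X_pow_mul {k : ℕ} (hk : k ≤ c) :
    Set.InjOn (fun F => mk (X ^ c) (X ^ (c - k) * F)) (degreeLT K k : Set K[X]) := by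
  intro F hF G hG h
  have hdvd : X ^ k ∣ F - G := by
    rw [← mul_dvd_mul_iff_left (pow_ne_zero (c - k) X_ne_zero), ← pow_add,
      Nat.sub_add_cancel hk, mul_sub]
    exact mk_eq_mk.1 h
  refine sub_eq_zero.1 (eq_zero_of_dvd_of_degree_lt hdvd ?_)
  rw [degree_X_pow]
  exact mem_degreeLT.1 (Submodule.sub_mem _ hF hG)

theorem ncard_annRootPow {k : ℕ} (hk : k ≤ c) : (annRootPow K c k).ncard = Nat.card K ^ k := by
  rw [← Nat.card_coe_set_eq, annRootPow_eq_image hk,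
    Nat.card_image_of_injOn (injOn_mk_X_pow_mul hk)]
  exact (Nat.card_congr (degreeLTEquiv K k).toEquiv).trans (by rw [Nat.card_fun, Nat.card_fin])

theorem mul_eq_zero_of_mem_annRootPow {k : ℕ} (hk : 2 * k ≤ c) {f g : AdjoinRoot (X ^ c : K[X])}
    (hf : f ∈ annRootPow K c k) (hg : g ∈ annRootPow K c k) : f * g = 0 := by
  rw [annRootPow_eq_image (by omega : k ≤ c)] at hf
  obtain ⟨F, -, rfl⟩ := hf
  calc mk (X ^ c) (X ^ (c - k) * F) * g
      = mk (X ^ c) F * root (X ^ c : K[X]) ^ (c - 2 * k) * (root (X ^ c : K[X]) ^ k * g) := by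
        rw [← root_pow_mul_mk, show c - k = c - 2 * k + k by omega, pow_add]
        ring
    _ = 0 := by rw [show root (X ^ c : K[X]) ^ k * g = 0 from hg, mul_zero]

end AdjoinRoot

section ZeroDivisorGraph

variable {p : ℕ} [Fact p.Prime]

theorem card_le_of_forall_mem_annRootPow {c k : ℕ} (hk : k ≤ c) {s : Finset (zd p c)}
    (hs : ∀ v ∈ s, (v : TPR p c) ∈ annRootPow (ZMod p) c k) : s.card ≤ p ^ k - 1 := by
  have h := Set.ncard_le_ncard_of_injOn (t := annRootPow (ZMod p) c k \ {0}) Subtype.val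
    (fun v hv => ⟨hs v hv, v.2.1⟩) Subtype.val_injective.injOn (Set.toFinite _)
  rwa [Set.ncard_coe_finset, Set.ncard_sdiff_singleton_of_mem (zero_mem_annRootPow k),
    ncard_annRootPow hk, Nat.card_zmod] at h

theorem pow_sub_one_le_cliqueNum_zdGraph (b : ℕ) : p ^ b - 1 ≤ (zdGraph p (2 * b)).cliqueNum := by
  set A := annRootPow (ZMod p) (2 * b) b
  have hA : A \ {0} ⊆ zd p (2 * b) := fun f hf =>
    ⟨hf.2, f, hf.2, mul_eq_zero_of_mem_annRootPow le_rfl hf.1 hf.1⟩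
  set S : Set (zd p (2 * b)) := Subtype.val ⁻¹' (A \ {0})
  have hS : (zdGraph p (2 * b)).IsClique S := fun u hu v hv huv =>
    ⟨huv, mul_eq_zero_of_mem_annRootPow le_rfl hu.1 hv.1⟩
  have hcard : S.ncard = p ^ b - 1 := by
    rw [Set.ncard_preimage_of_injective_subset_range Subtype.val_injective (by simpa using hA),
      Set.ncard_sdiff_singleton_of_mem (zero_mem_annRootPow b), ncard_annRootPow (by omega),
      Nat.card_zmod]
  rw [← hcard, Set.ncard_eq_toFinset_card S (Set.toFinite S)]
  exact SimpleGraph.IsClique.card_le_cliqueNum (tc := by rwa [Set.Finite.coe_toFinset])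

theorem card_le_of_isClique_zdGraph {b : ℕ} {t : Finset (zd p (2 * b))}
    (ht : (zdGraph p (2 * b)).IsClique t) : t.card ≤ p ^ b - 1 := by
  by_cases hall : ∀ v ∈ t, (v : TPR p (2 * b)) ∈ annRootPow (ZMod p) (2 * b) b
  · exact card_le_of_forall_mem_annRootPow (by omega) hall
  push Not at hall
  obtain ⟨v, hv, hvb⟩ := hall
  have hb : b < 2 * b := lt_of_root_pow_mul_ne_zero hvb
  have herase : (t.erase v).card ≤ p ^ (b - 1) - 1 := by
    refine card_le_of_forall_mem_annRootPow (by omega) fun u hu => ?_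
    by_contra hub
    exact mul_ne_zero_of_root_pow_mul_ne_zero hvb hub (by omega)
      (ht hv (Finset.mem_of_mem_erase hu) (Finset.ne_of_mem_erase hu).symm).2
  have hp := (Fact.out : p.Prime).one_lt
  have hpow : 1 ≤ p ^ (b - 1) := Nat.one_le_pow _ _ (by omega)
  calc t.card = (t.erase v).card + 1 := (Finset.card_erase_add_one hv).symm
    _ ≤ p ^ (b - 1) := by omega
    _ ≤ p ^ b - 1 := Nat.le_sub_one_of_lt (Nat.pow_lt_pow_right hp (by omega))

end ZeroDivisorGraph

theorem stmt_4_general (p b : ℕ) [Fact p.Prime] :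
    (zdGraph p (2 * b)).cliqueNum = p ^ b - 1 := by
  obtain ⟨t, ht⟩ := (zdGraph p (2 * b)).exists_isNClique_cliqueNum
  exact le_antisymm (ht.card_eq ▸ card_le_of_isClique_zdGraph ht.isClique)
    (pow_sub_one_le_cliqueNum_zdGraph b)

/-- The clique number of the zero-divisor graph of `𝔽_p[x]/(x^(2b))` equals `p^b - 1`. -/
theorem stmt_4 (p b : ℕ) [Fact p.Prime] (hb : 1 ≤ b) :
    (zdGraph p (2 * b)).cliqueNum = p ^ b - 1 :=
  stmt_4_general p b
end
end

section
/- Let Γ(R) be the zero-divisor graph of R = 𝔽_p[x]/(x^{2b}) with b ≥ 1. The set L of nonzero zero-divisors whose minimal degree is at most b−1 is an independent set of size p^{2b−1} − p^b. -/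
/-!
Through its canonical representative, an element of `𝔽_p[x]/(x^c)` is a coefficient vector in
`𝔽_p^c`, and `mindeg` is the trailing degree of that polynomial. Trailing degrees add under
multiplication, so for nonzero `f, g` we have `f g = 0` iff `mindeg f + mindeg g ≥ c`; with
`c = 2b` two elements of `mindeg ≤ b - 1` therefore never annihilate each other. The elements
whose first `k` coefficients vanish number `p^(c-k)`, and `L` consists of those with the first
coefficient zero but not all of the first `b`, giving `p^(2b-1) - p^b`.
-/

open Polynomial

noncomputable section

theorem Polynomial.le_natTrailingDegree_iff {R : Type*} [Semiring R] {q : R[X]} (hq : q ≠ 0)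
    {n : ℕ} : n ≤ q.natTrailingDegree ↔ ∀ m < n, q.coeff m = 0 :=
  ⟨fun h _ hm => coeff_eq_zero_of_lt_natTrailingDegree (hm.trans_le h), le_natTrailingDegree hq⟩

theorem ncard_setOf_forall_lt_apply_eq_zero (K : Type*) [Fintype K] [Zero K] (c k : ℕ) :
    {w : Fin c → K | ∀ i : Fin c, (i : ℕ) < k → w i = 0}.ncard = Fintype.card K ^ (c - k) := by
  have hset : {w : Fin c → K | ∀ i : Fin c, (i : ℕ) < k → w i = 0} =
      ((Fintype.piFinset fun i : Fin c => if (i : ℕ) < k then {0} else Finset.univ :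
        Finset (Fin c → K)) : Set (Fin c → K)) := by
    ext w
    simp only [Set.mem_ofPred_eq, Finset.mem_coe, Fintype.mem_piFinset]
    refine forall_congr' fun i => ?_
    split_ifs <;> simp_all
  have hcard : (Finset.univ.filter fun i : Fin c => ¬ (i : ℕ) < k).card = c - k := by
    rw [Finset.filter_not, Finset.card_sdiff_of_subset (Finset.filter_subset _ _),
      Fin.card_filter_val_lt, Finset.card_univ, Fintype.card_fin]
    omega
  rw [hset, Set.ncard_coe_finset, Fintype.card_piFinset]
  simp only [apply_ite Finset.card, Finset.card_singleton, Finset.card_univ, Finset.prod_ite,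
    Finset.prod_const_one, Finset.prod_const, one_mul, hcard]

namespace TPR

variable {p c : ℕ}

theorem canon_eq_modByMonicHom (f : TPR p c) :
    canon f = AdjoinRoot.modByMonicHom (monic_X_pow c) f := by
  rw [canon, ← AdjoinRoot.modByMonicHom_mk (monic_X_pow c),
    Function.surjInv_eq AdjoinRoot.mk_surjective]

theorem mk_canon (f : TPR p c) : AdjoinRoot.mk (X ^ c) (canon f) = f := by
  rw [canon_eq_modByMonicHom]
  exact AdjoinRoot.mk_leftInverse _ f

theorem canon_injective : Function.Injective (canon : TPR p c → (ZMod p)[X]) :=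
  fun f g h => by rw [← mk_canon f, h, mk_canon]

theorem canon_eq_zero_iff {f : TPR p c} : canon f = 0 ↔ f = 0 := by
  rw [← canon_injective.eq_iff, canon_eq_modByMonicHom 0, map_zero]

theorem degree_canon_lt [Fact p.Prime] (f : TPR p c) : (canon f).degree < c :=
  (degree_modByMonic_lt _ (monic_X_pow c)).trans_eq (degree_X_pow c)

theorem canon_mk [Fact p.Prime] {q : (ZMod p)[X]} (hq : q.degree < c) :
    canon (AdjoinRoot.mk (X ^ c) q) = q := by
  rw [canon_eq_modByMonicHom, AdjoinRoot.modByMonicHom_mk,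
    (modByMonic_eq_self_iff (monic_X_pow c)).2 (by rwa [degree_X_pow])]

theorem mul_eq_zero_iff_le_mindeg_add [Fact p.Prime] {f g : TPR p c} (hf : f ≠ 0) (hg : g ≠ 0) :
    f * g = 0 ↔ c ≤ mindeg f + mindeg g := by
  have hf' : canon f ≠ 0 := canon_eq_zero_iff.not.2 hf
  have hg' : canon g ≠ 0 := canon_eq_zero_iff.not.2 hg
  have hfg : f * g = AdjoinRoot.mk (X ^ c) (canon f * canon g) := by
    rw [map_mul, mk_canon, mk_canon]
  rw [hfg, AdjoinRoot.mk_eq_zero, X_pow_dvd_iff, ← le_natTrailingDegree_iff (mul_ne_zero hf' hg'),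
    natTrailingDegree_mul hf' hg', mindeg, mindeg]

def canonEquiv [Fact p.Prime] : TPR p c ≃ degreeLT (ZMod p) c where
  toFun f := ⟨canon f, mem_degreeLT.2 (degree_canon_lt f)⟩
  invFun q := AdjoinRoot.mk (X ^ c) q
  left_inv := mk_canon
  right_inv q := Subtype.ext (canon_mk (mem_degreeLT.1 q.2))

def coeffEquiv [Fact p.Prime] : TPR p c ≃ (Fin c → ZMod p) :=
  canonEquiv.trans (degreeLTEquiv (ZMod p) c).toEquiv

theorem coeffEquiv_apply [Fact p.Prime] (f : TPR p c) (i : Fin c) :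
    coeffEquiv f i = (canon f).coeff i :=
  rfl

theorem ncard_setOf_forall_lt_coeff_canon_eq_zero [Fact p.Prime] (k : ℕ) :
    {f : TPR p c | ∀ i < k, (canon f).coeff i = 0}.ncard = p ^ (c - k) := by
  have hset : {f : TPR p c | ∀ i < k, (canon f).coeff i = 0} =
      coeffEquiv ⁻¹' {w | ∀ i : Fin c, (i : ℕ) < k → w i = 0} := by
    ext f
    simp only [Set.mem_ofPred_eq, Set.mem_preimage, coeffEquiv_apply]
    refine ⟨fun h i hi => h i hi, fun h i hi => ?_⟩
    by_cases hic : i < c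
    · exact h ⟨i, hic⟩ hi
    · exact coeff_eq_zero_of_degree_lt
        ((degree_canon_lt f).trans_le (by exact_mod_cast not_lt.1 hic))
  rw [hset, Set.ncard_preimage_of_injective_subset_range coeffEquiv.injective
    (by simp [coeffEquiv.range_eq_univ]), ncard_setOf_forall_lt_apply_eq_zero, ZMod.card]

theorem ncard_setOf_mindeg_mem_Ico [Fact p.Prime] {k : ℕ} (hk : 1 ≤ k) (l : ℕ) :
    {f : TPR p c | mindeg f ∈ Set.Ico k l}.ncard = p ^ (c - k) - p ^ (c - l) := by
  rcases le_total k l with hkl | hlk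
  · have hset : {f : TPR p c | mindeg f ∈ Set.Ico k l} =
        {f | ∀ i < k, (canon f).coeff i = 0} \ {f | ∀ i < l, (canon f).coeff i = 0} := by
      ext f
      simp only [Set.mem_ofPred_eq, Set.mem_sdiff, Set.mem_Ico, mindeg]
      by_cases hf : canon f = 0
      · simp only [hf, natTrailingDegree_zero, coeff_zero, implies_true, not_true, and_false,
          iff_false, not_and]
        omega
      · rw [← le_natTrailingDegree_iff hf, ← le_natTrailingDegree_iff hf, not_le]
    rw [hset, Set.ncard_sdiff (Set.ofPred_subset_ofPred.2 fun f hf i hi => hf i (hi.trans_le hkl)),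
      ncard_setOf_forall_lt_coeff_canon_eq_zero, ncard_setOf_forall_lt_coeff_canon_eq_zero]
  · simp only [Set.Ico_eq_empty_of_le hlk, Set.mem_empty_iff_false, Set.ofPred_false,
      Set.ncard_empty]
    refine (Nat.sub_eq_zero_of_le ?_).symm
    exact Nat.pow_le_pow_right (Fact.out : p.Prime).pos (by omega)

end TPR

theorem stmt_5_general (p b : ℕ) [Fact p.Prime]
    (L : Set (zd p (2 * b)))
    (hL : L = {v | 1 ≤ mindeg (v : TPR p (2 * b)) ∧ mindeg (v : TPR p (2 * b)) ≤ b - 1}) :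
    (∀ u ∈ L, ∀ v ∈ L, ¬ (zdGraph p (2 * b)).Adj u v) ∧
      L.ncard = p ^ (2 * b - 1) - p ^ b := by
  -- `hL` equates subsets of `TPR p (2 * b)`: its left side is `Subtype.val '' L`.
  have hmem {v : zd p (2 * b)} (hv : v ∈ L) : 1 ≤ mindeg (v : TPR p (2 * b)) ∧
      mindeg (v : TPR p (2 * b)) ≤ b - 1 := by
    have h := Set.mem_image_of_mem Subtype.val hv
    rwa [hL] at h
  refine ⟨fun u hu v hv huv => ?_, ?_⟩
  · have hsum := (TPR.mul_eq_zero_iff_le_mindeg_add u.2.1 v.2.1).1 huv.2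
    have hu' := hmem hu
    have hv' := hmem hv
    omega
  · have hset : {f : TPR p (2 * b) | 1 ≤ mindeg f ∧ mindeg f ≤ b - 1} =
        {f | mindeg f ∈ Set.Ico 1 b} := by
      ext f
      simp only [Set.mem_ofPred_eq, Set.mem_Ico]
      omega
    rw [← Set.ncard_image_of_injective L Subtype.val_injective, hL, hset,
      TPR.ncard_setOf_mindeg_mem_Ico le_rfl]
    congr 2
    omega

/-- In `Γ(𝔽_p[x]/(x^(2b)))`, the set of vertices with `1 ≤ mindeg ≤ b - 1` is an
independent set of size `p^(2b-1) - p^b`. -/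
theorem stmt_5 (p b : ℕ) [Fact p.Prime] (hb : 1 ≤ b)
    (L : Set (zd p (2 * b)))
    (hL : L = {v | 1 ≤ mindeg (v : TPR p (2 * b)) ∧ mindeg (v : TPR p (2 * b)) ≤ b - 1}) :
    (∀ u ∈ L, ∀ v ∈ L, ¬ (zdGraph p (2 * b)).Adj u v) ∧
      L.ncard = p ^ (2 * b - 1) - p ^ b :=
  stmt_5_general p b L hL
end
end

section
/- In the zero-divisor graph of R = 𝔽_p[x]/(x^{2b}) with b ≥ 1, a vertex v with mindeg(v) = i has degree p^i − 1 if i < b, and degree p^i − 2 if i ≥ b. -/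
/-! Write a nonzero `v` as `x^i * w` with `i = mindeg v` and `w` a unit. Then the neighbours of `v`
are the elements of `Ann(x^i) = x^(c-i) * 𝔽_p[x]_{<i}`, a set with `p^i` elements, other than `0`
and `v` itself; and `v` lies in `Ann(x^i)` exactly when `x^(2i) = 0`, i.e. when `c ≤ 2i`. -/

open Polynomial

noncomputable section

theorem Set.ncard_sdiff_pair {α : Type*} {s : Set α} {a b : α} [Decidable (b ∈ s)] (ha : a ∈ s) (hab : a ≠ b) :
    (s \ {a, b}).ncard = s.ncard - if b ∈ s then 2 else 1 := by
  split_ifs with hb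
  · rw [Set.ncard_sdiff (Set.pair_subset ha hb), Set.ncard_pair hab]
  · rw [Set.pair_comm, Set.sdiff_insert_of_notMem hb, Set.ncard_sdiff_singleton_of_mem ha]

theorem Polynomial.X_pow_sub_mul_mem_degreeLT_iff {R : Type*} [Semiring R] {n i : ℕ}
    (hi : i ≤ n) {w : R[X]} : X ^ (n - i) * w ∈ degreeLT R n ↔ w ∈ degreeLT R i := by
  simp only [mem_degreeLT, degree_lt_iff_coeff_zero]
  constructor
  · intro h m hm
    rw [← coeff_X_pow_mul]
    exact h _ (by omega)
  · intro h m hm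
    rw [coeff_X_pow_mul', if_pos (by omega)]
    exact h _ (by omega)

namespace AdjoinRoot

theorem mk_modByMonic {R : Type*} [CommRing R] {g : R[X]} (hg : g.Monic) (q : R[X]) :
    mk g (q %ₘ g) = mk g q := by
  rw [← modByMonicHom_mk hg, mk_leftInverse hg]

variable {K : Type*} [CommRing K] [IsDomain K] {c i : ℕ}

theorem root_X_pow_pow_eq_zero_iff : root (X ^ c : K[X]) ^ i = 0 ↔ c ≤ i := by
  rw [← mk_X, ← map_pow, mk_eq_zero]
  exact pow_dvd_pow_iff X_ne_zero not_isUnit_X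

theorem exists_mem_degreeLT_mk_X_pow_eq (g : AdjoinRoot (X ^ c : K[X])) :
    ∃ q ∈ degreeLT K c, mk (X ^ c) q = g := by
  obtain ⟨r, rfl⟩ := mk_surjective g
  exact ⟨r %ₘ X ^ c, mem_degreeLT.mpr (by simpa using degree_modByMonic_lt r (monic_X_pow c)),
    mk_modByMonic (monic_X_pow c) r⟩

theorem mk_X_pow_injOn : Set.InjOn (mk (X ^ c : K[X])) (degreeLT K c) := by
  intro f hf g hg h
  have hmod := congrArg (modByMonicHom (monic_X_pow c)) h
  rwa [modByMonicHom_mk, modByMonicHom_mk,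
    (modByMonic_eq_self_iff (monic_X_pow c)).mpr (by simpa using mem_degreeLT.mp hf),
    (modByMonic_eq_self_iff (monic_X_pow c)).mpr (by simpa using mem_degreeLT.mp hg)] at hmod

theorem setOf_mul_root_X_pow_pow_eq_zero (hi : i ≤ c) :
    {g | g * root (X ^ c : K[X]) ^ i = 0} =
      (fun w => mk (X ^ c) (X ^ (c - i) * w)) '' (degreeLT K i) := by
  ext g
  constructor
  · obtain ⟨q, hq, rfl⟩ := exists_mem_degreeLT_mk_X_pow_eq g
    intro hq0
    rw [Set.mem_ofPred_eq, ← mk_X, ← map_pow, ← map_mul, mk_eq_zero,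
      ← Nat.sub_add_cancel hi, pow_add, mul_dvd_mul_iff_right (pow_ne_zero _ X_ne_zero)] at hq0
    obtain ⟨w, rfl⟩ := hq0
    exact ⟨w, (X_pow_sub_mul_mem_degreeLT_iff hi).mp hq, rfl⟩
  · rintro ⟨w, -, rfl⟩
    rw [Set.mem_ofPred_eq, ← mk_X, ← map_pow, ← map_mul, mk_eq_zero]
    exact ⟨w, by rw [mul_right_comm, ← pow_add, Nat.sub_add_cancel hi]⟩

theorem ncard_setOf_mul_root_X_pow_pow_eq_zero [Finite K] (hi : i ≤ c) :
    {g | g * root (X ^ c : K[X]) ^ i = 0}.ncard = Nat.card K ^ i := by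
  have hinj : Set.InjOn (fun w => mk (X ^ c) (X ^ (c - i) * w)) (degreeLT K i) :=
    mk_X_pow_injOn.comp (mul_right_injective₀ (pow_ne_zero _ X_ne_zero)).injOn
      fun w hw => (X_pow_sub_mul_mem_degreeLT_iff (R := K) hi).mpr hw
  rw [setOf_mul_root_X_pow_pow_eq_zero hi, hinj.ncard_image, ← Nat.card_coe_set_eq,
    SetLike.coe_sort_coe, Nat.card_congr (degreeLTEquiv K i).toEquiv, Nat.card_fun, Nat.card_fin]

theorem isUnit_mk_X_pow_of_not_X_dvd {F : Type*} [Field F] {u : F[X]} (hu : ¬ X ∣ u) :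
    IsUnit (mk (X ^ c) u) := by
  obtain ⟨a, b, hab⟩ := (irreducible_X.coprime_iff_not_dvd.mpr hu).pow_left (m := c)
  refine .of_mul_eq_one (mk _ b) ?_
  simpa [mul_comm] using congrArg (mk (X ^ c)) hab

end AdjoinRoot

section ZeroDivisorGraph

variable {p c : ℕ}

theorem mk_canon (f : TPR p c) : AdjoinRoot.mk (X ^ c) (canon f) = f := by
  rw [canon, AdjoinRoot.mk_modByMonic (monic_X_pow c)]
  exact Function.surjInv_eq _ f

theorem image_val_neighborSet_zdGraph (v : zd p c) :
    Subtype.val '' (zdGraph p c).neighborSet v =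
      {g : TPR p c | g * v = 0} \ {0, (v : TPR p c)} := by
  ext g
  simp only [Set.mem_image, SimpleGraph.mem_neighborSet, Set.mem_sdiff, Set.mem_ofPred_eq,
    Set.mem_insert_iff, Set.mem_singleton_iff, not_or]
  constructor
  · rintro ⟨g, ⟨hvg, hmul⟩, rfl⟩
    exact ⟨by rw [mul_comm, hmul], g.2.1, fun h => hvg (Subtype.ext h.symm)⟩
  · rintro ⟨hmul, hg0, hgv⟩
    exact ⟨⟨g, hg0, v, v.2.1, hmul⟩, ⟨fun h => hgv (congrArg Subtype.val h).symm,
      by rw [mul_comm]; exact hmul⟩, rfl⟩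

variable [Fact p.Prime]

theorem exists_isUnit_eq_root_pow_mindeg_mul {f : TPR p c} (hf : f ≠ 0) :
    ∃ w, IsUnit w ∧ f = AdjoinRoot.root (X ^ c) ^ mindeg f * w := by
  have hcanon : canon f ≠ 0 := fun h => hf (by rw [← mk_canon f, h, map_zero])
  obtain ⟨u, hu, hX⟩ := (canon f).exists_eq_pow_rootMultiplicity_mul_and_not_dvd hcanon 0
  rw [rootMultiplicity_eq_natTrailingDegree'] at hu
  rw [C_0, sub_zero] at hu hX
  refine ⟨_, AdjoinRoot.isUnit_mk_X_pow_of_not_X_dvd hX, ?_⟩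
  conv_lhs => rw [← mk_canon f, hu, map_mul, map_pow, AdjoinRoot.mk_X]
  rfl

theorem ncard_neighborSet_zdGraph (v : zd p c) :
    ((zdGraph p c).neighborSet v).ncard =
      p ^ mindeg (v : TPR p c) - if c ≤ 2 * mindeg (v : TPR p c) then 2 else 1 := by
  classical
  obtain ⟨w, hw, hv⟩ := exists_isUnit_eq_root_pow_mindeg_mul v.2.1
  set i := mindeg (v : TPR p c)
  set A := {g | g * AdjoinRoot.root (X ^ c : (ZMod p)[X]) ^ i = 0}
  have hann : {g : TPR p c | g * v = 0} = A := by
    ext g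
    rw [Set.mem_ofPred_eq, Set.mem_ofPred_eq, hv, ← mul_assoc, hw.mul_left_eq_zero]
  have hic : i ≤ c := by
    by_contra! hci
    exact v.2.1 (by rw [hv, AdjoinRoot.root_X_pow_pow_eq_zero_iff.mpr hci.le, zero_mul])
  have hvA : (v : TPR p c) ∈ A ↔ c ≤ 2 * i := by
    rw [Set.mem_ofPred_eq, hv, mul_right_comm, ← pow_add, hw.mul_left_eq_zero,
      AdjoinRoot.root_X_pow_pow_eq_zero_iff, two_mul]
  rw [← Subtype.val_injective.injOn.ncard_image, image_val_neighborSet_zdGraph, hann,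
    Set.ncard_sdiff_pair (by simp [A]) (Ne.symm v.2.1),
    AdjoinRoot.ncard_setOf_mul_root_X_pow_pow_eq_zero hic, Nat.card_zmod, if_congr hvA rfl rfl]

end ZeroDivisorGraph

theorem stmt_7_general (p b : ℕ) [Fact p.Prime] (v : zd p (2 * b)) :
    (mindeg (v : TPR p (2 * b)) < b →
      ((zdGraph p (2 * b)).neighborSet v).ncard = p ^ mindeg (v : TPR p (2 * b)) - 1) ∧
    (b ≤ mindeg (v : TPR p (2 * b)) →
      ((zdGraph p (2 * b)).neighborSet v).ncard = p ^ mindeg (v : TPR p (2 * b)) - 2) := by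
  refine ⟨fun h => ?_, fun h => ?_⟩
  · rw [ncard_neighborSet_zdGraph, if_neg (by omega)]
  · rw [ncard_neighborSet_zdGraph, if_pos (by omega)]

/-- In `Γ(𝔽_p[x]/(x^(2b)))`, a vertex `v` with `mindeg v = i` has degree
`p^i - 1` if `i < b`, and degree `p^i - 2` if `i ≥ b`. -/
theorem stmt_7 (p b : ℕ) [Fact p.Prime] (hb : 1 ≤ b) (v : zd p (2 * b)) :
    (mindeg (v : TPR p (2 * b)) < b →
      ((zdGraph p (2 * b)).neighborSet v).ncard = p ^ mindeg (v : TPR p (2 * b)) - 1) ∧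
    (b ≤ mindeg (v : TPR p (2 * b)) →
      ((zdGraph p (2 * b)).neighborSet v).ncard = p ^ mindeg (v : TPR p (2 * b)) - 2) :=
  stmt_7_general p b v
end
end

section
/- Let G be a connected graph on n vertices with diameter at most 2, with Laplacian eigenvalues λ_1 ≥ … ≥ λ_{n−1} > λ_n = 0. Then the distance Laplacian eigenvalues of G are exactly 2n − λ_{n−1} ≥ 2n − λ_{n−2} ≥ … ≥ 2n − λ_1 together with 0. -/
/-!
For diameter at most 2 the distance matrix is `A(G) + 2 A(Gᶜ)`, so the distance Laplacian is
`L(G) + 2 L(Gᶜ) = 2 L(Kₙ) - L(G)`, where `L(Kₙ) = n I - J`. These Laplacians have zero column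
sums, so an eigenvector for a nonzero eigenvalue is orthogonal to `𝟙`, and there `L(Kₙ)` acts as
`n`; this matches the eigenvalue `ν ∉ {0, 2n}` of the distance Laplacian with `2n - ν` of `L(G)`.
For `ν = 2n` one gets `L(G) x = -2 (∑ x) 𝟙`, which forces `∑ x = 0`; then `x` lies in the kernel
of `L(G)`, the constants, so `x = 0`. The kernel of the positive semidefinite sum
`L(G) + 2 L(Gᶜ)` is the intersection of the kernels, again the constants.
-/

noncomputable section

open Matrix Finset Module.End
open scoped ComplexOrder

namespace Matrix

theorem PosSemidef.add_mulVec_eq_zero_iff {𝕜 n : Type*} [RCLike 𝕜] [Fintype n]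
    {A B : Matrix n n 𝕜} (hA : A.PosSemidef) (hB : B.PosSemidef) (x : n → 𝕜) :
    (A + B) *ᵥ x = 0 ↔ A *ᵥ x = 0 ∧ B *ᵥ x = 0 := by
  refine ⟨fun h => ?_, fun ⟨hAx, hBx⟩ => by rw [add_mulVec, hAx, hBx, add_zero]⟩
  have hsum : star x ⬝ᵥ A *ᵥ x + star x ⬝ᵥ B *ᵥ x = 0 := by
    rw [← dotProduct_add, ← add_mulVec, h, dotProduct_zero]
  rw [← hA.dotProduct_mulVec_zero_iff, ← hB.dotProduct_mulVec_zero_iff]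
  exact (add_eq_zero_iff_of_nonneg (hA.dotProduct_mulVec_nonneg x)
    (hB.dotProduct_mulVec_nonneg x)).mp hsum

theorem sum_eq_zero_of_mulVec_eq_smul {K n : Type*} [Field K] [Fintype n] {A : Matrix n n K}
    (hA : (fun _ => 1) ᵥ* A = 0) {μ : K} (hμ : μ ≠ 0) {x : n → K} (hx : A *ᵥ x = μ • x) :
    ∑ i, x i = 0 := by
  have h := dotProduct_mulVec (fun _ => 1) A x
  rw [hA, zero_dotProduct, hx, dotProduct_smul, smul_eq_mul] at h
  simpa [dotProduct, hμ] using h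

end Matrix

namespace SimpleGraph

variable {V : Type*} [DecidableEq V]

theorem Connected.dist_eq_adjMatrix_add_compl {G : SimpleGraph V} [DecidableRel G.Adj]
    (hconn : G.Connected) (hdiam : ∀ u v, G.dist u v ≤ 2) (u v : V) :
    (G.dist u v : ℝ) = G.adjMatrix ℝ u v + 2 * Gᶜ.adjMatrix ℝ u v := by
  by_cases huv : u = v
  · subst huv; simp
  by_cases hadj : G.Adj u v
  · simp [dist_eq_one_iff_adj.mpr hadj, hadj]
  · have hpos := hconn.pos_dist_of_ne huv
    have hne := mt dist_eq_one_iff_adj.mp hadj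
    have hle := hdiam u v
    have h2 : G.dist u v = 2 := by omega
    simp [h2, hadj, huv]

variable [Fintype V]

theorem lapMatrix_add_lapMatrix_compl (G : SimpleGraph V) [DecidableRel G.Adj]
    {R : Type*} [Ring R] :
    G.lapMatrix R + Gᶜ.lapMatrix R = (⊤ : SimpleGraph V).lapMatrix R := by
  ext u v
  by_cases huv : u = v
  · subst huv
    have hdeg : G.degree u + Gᶜ.degree u = Fintype.card V - 1 := by
      have := G.degree_lt_card_verts u
      rw [degree_compl]; omega
    simp [lapMatrix, degMatrix, ← Nat.cast_add, hdeg]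
  · by_cases hadj : G.Adj u v <;> simp [lapMatrix, degMatrix, huv, hadj]

theorem vecMul_lapMatrix_const_eq_zero (G : SimpleGraph V) [DecidableRel G.Adj]
    {R : Type*} [CommRing R] : (fun _ => 1) ᵥ* G.lapMatrix R = 0 := by
  rw [← (isSymm_lapMatrix R G).eq, vecMul_transpose, lapMatrix_mulVec_const_eq_zero]

theorem Connected.lapMatrix_mulVec_eq_zero_iff {G : SimpleGraph V} [DecidableRel G.Adj]
    (hconn : G.Connected) {x : V → ℝ} : G.lapMatrix ℝ *ᵥ x = 0 ↔ ∀ i j, x i = x j := by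
  rw [lapMatrix_mulVec_eq_zero_iff_forall_reachable]
  exact ⟨fun h i j => h i j (hconn.preconnected i j), fun h i j _ => h i j⟩

theorem Connected.finrank_eigenspace_lapMatrix_zero {G : SimpleGraph V} [DecidableRel G.Adj]
    (hconn : G.Connected) : Module.finrank ℝ (eigenspace (G.lapMatrix ℝ).mulVecLin 0) = 1 := by
  rw [eigenspace_zero, ← toLin'_apply',
    ← card_connectedComponent_eq_finrank_ker_toLin'_lapMatrix, Fintype.card_eq_one_iff]
  have := hconn.preconnected.subsingleton_connectedComponent
  exact ⟨G.connectedComponentMk hconn.nonempty.some, fun _ => Subsingleton.elim _ _⟩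

theorem lapMatrix_top_mulVec_apply (x : V → ℝ) (v : V) :
    ((⊤ : SimpleGraph V).lapMatrix ℝ *ᵥ x) v = Fintype.card V * x v - ∑ u, x u := by
  rw [lapMatrix_mulVec_apply, neighborFinset_top, ← sum_compl_add_sum {v}, complete_graph_degree,
    sum_singleton, Nat.cast_pred (Fintype.card_pos_iff.mpr ⟨v⟩)]
  ring

section ShiftedLaplacian

variable {L : Matrix V V ℝ} (c : ℝ)

theorem smul_lapMatrix_top_sub_mulVec {x : V → ℝ} (hx : ∑ i, x i = 0) :
    (c • (⊤ : SimpleGraph V).lapMatrix ℝ - L) *ᵥ x = (c * Fintype.card V) • x - L *ᵥ x := by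
  ext v
  simp [sub_mulVec, smul_mulVec, lapMatrix_top_mulVec_apply, hx, mul_assoc]

theorem eigenspace_smul_lapMatrix_top_sub (hL : (fun _ => 1) ᵥ* L = 0) {ν : ℝ} (hν₀ : ν ≠ 0)
    (hν : ν ≠ c * Fintype.card V) :
    eigenspace (c • (⊤ : SimpleGraph V).lapMatrix ℝ - L).mulVecLin ν =
      eigenspace L.mulVecLin (c * Fintype.card V - ν) := by
  have hM : (fun _ => 1) ᵥ* (c • (⊤ : SimpleGraph V).lapMatrix ℝ - L) = 0 := by
    rw [vecMul_sub, vecMul_smul, vecMul_lapMatrix_const_eq_zero, hL, smul_zero, sub_zero]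
  ext x
  simp only [mem_eigenspace_iff, mulVecLin_apply]
  constructor
  · intro hx
    rw [smul_lapMatrix_top_sub_mulVec c (sum_eq_zero_of_mulVec_eq_smul hM hν₀ hx)] at hx
    rw [sub_smul, ← hx, sub_sub_cancel]
  · intro hx
    rw [smul_lapMatrix_top_sub_mulVec c
      (sum_eq_zero_of_mulVec_eq_smul hL (sub_ne_zero.mpr hν.symm) hx), hx, sub_smul,
      sub_sub_cancel]

theorem eigenspace_smul_lapMatrix_top_sub_eq_bot (hL : (fun _ => 1) ᵥ* L = 0)
    (hker : ∀ x, L *ᵥ x = 0 → ∀ i j, x i = x j) (hc : c ≠ 0) :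
    eigenspace (c • (⊤ : SimpleGraph V).lapMatrix ℝ - L).mulVecLin (c * Fintype.card V) = ⊥ := by
  rcases isEmpty_or_nonempty V with _ | _
  · exact Submodule.eq_bot_of_subsingleton
  rw [Submodule.eq_bot_iff]
  intro x hx
  rw [mem_eigenspace_iff, mulVecLin_apply] at hx
  have hLx : L *ᵥ x = fun _ => -(c * ∑ i, x i) := by
    ext v
    have h := congrFun hx v
    simp only [sub_mulVec, smul_mulVec, Pi.sub_apply, Pi.smul_apply, lapMatrix_top_mulVec_apply,
      smul_eq_mul] at h
    linarith
  have hn : (Fintype.card V : ℝ) ≠ 0 := Nat.cast_ne_zero.mpr Fintype.card_ne_zero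
  have hsum : ∑ i, x i = 0 := by
    have h := dotProduct_mulVec (fun _ => 1) L x
    rw [hL, zero_dotProduct, hLx] at h
    simpa [dotProduct, hc, hn] using h
  have hconst := hker x (by rw [hLx, hsum, mul_zero, neg_zero]; rfl)
  ext i
  have h := hsum
  rw [sum_congr rfl fun j _ => hconst j i, sum_const, card_univ, nsmul_eq_mul] at h
  simpa [hn] using h

end ShiftedLaplacian

def distLapMatrix (G : SimpleGraph V) : Matrix V V ℝ :=
  diagonal (fun v => ∑ u, (G.dist v u : ℝ)) - of fun u v => (G.dist u v : ℝ)

variable {G : SimpleGraph V} [DecidableRel G.Adj]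

theorem distLapMatrix_eq_lapMatrix_add_compl (hconn : G.Connected)
    (hdiam : ∀ u v, G.dist u v ≤ 2) :
    G.distLapMatrix = G.lapMatrix ℝ + (2 : ℝ) • Gᶜ.lapMatrix ℝ := by
  have hrow : ∀ v, ∑ u, (G.dist v u : ℝ) = G.degree v + 2 * Gᶜ.degree v := by
    intro v
    simp only [hconn.dist_eq_adjMatrix_add_compl hdiam, sum_add_distrib, ← mul_sum,
      adjMatrix_apply, ← degree_eq_sum_if_adj]
  ext u v
  by_cases huv : u = v
  · subst huv
    rw [distLapMatrix, Matrix.sub_apply, diagonal_apply_eq, hrow]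
    simp [lapMatrix, degMatrix]
  · by_cases hadj : G.Adj u v <;>
      simp [distLapMatrix, lapMatrix, degMatrix, huv, hadj, hconn.dist_eq_adjMatrix_add_compl hdiam]

theorem distLapMatrix_eq_two_smul_lapMatrix_top_sub (hconn : G.Connected)
    (hdiam : ∀ u v, G.dist u v ≤ 2) :
    G.distLapMatrix = (2 : ℝ) • (⊤ : SimpleGraph V).lapMatrix ℝ - G.lapMatrix ℝ := by
  rw [distLapMatrix_eq_lapMatrix_add_compl hconn hdiam, ← lapMatrix_add_lapMatrix_compl G]
  module

theorem eigenspace_distLapMatrix_zero (hconn : G.Connected) (hdiam : ∀ u v, G.dist u v ≤ 2) :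
    eigenspace G.distLapMatrix.mulVecLin 0 = eigenspace (G.lapMatrix ℝ).mulVecLin 0 := by
  ext x
  simp only [mem_eigenspace_iff, mulVecLin_apply, zero_smul]
  rw [distLapMatrix_eq_lapMatrix_add_compl hconn hdiam,
    (posSemidef_lapMatrix ℝ G).add_mulVec_eq_zero_iff
      ((posSemidef_lapMatrix ℝ Gᶜ).smul zero_le_two),
    and_iff_left_iff_imp, hconn.lapMatrix_mulVec_eq_zero_iff]
  intro hconst
  rw [smul_mulVec, (lapMatrix_mulVec_eq_zero_iff_forall_adj Gᶜ).mpr fun i j _ => hconst i j,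
    smul_zero]

end SimpleGraph

open scoped Classical in
/-- Aouchiche–Hansen: for a connected graph `G` on `n` vertices with diameter at
most `2`, the distance Laplacian eigenvalues are exactly `2n - λ` for each nonzero
Laplacian eigenvalue `λ` (with the same multiplicities), together with the simple
eigenvalue `0`. -/
theorem stmt_19 {V : Type*} [Fintype V] (G : SimpleGraph V)
    (hconn : G.Connected) (hdiam : ∀ u v : V, G.dist u v ≤ 2)
    (n : ℕ) (hn : n = Fintype.card V)
    (L : Matrix V V ℝ)
    (hLdef : L = Matrix.diagonal (fun v => (G.degree v : ℝ)) - G.adjMatrix ℝ)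
    (DL : Matrix V V ℝ)
    (hDLdef : DL = Matrix.diagonal (fun v => ∑ u : V, (G.dist v u : ℝ)) -
      Matrix.of (fun u v => (G.dist u v : ℝ))) :
    Module.finrank ℝ (Module.End.eigenspace DL.mulVecLin (0 : ℝ)) = 1 ∧
    Module.finrank ℝ (Module.End.eigenspace DL.mulVecLin ((2 * n : ℝ))) = 0 ∧
    (∀ ν : ℝ, ν ≠ 0 → ν ≠ 2 * n →
      Module.finrank ℝ (Module.End.eigenspace DL.mulVecLin ν) =
        Module.finrank ℝ (Module.End.eigenspace L.mulVecLin (2 * n - ν))) := by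
  obtain rfl : L = G.lapMatrix ℝ := hLdef
  obtain rfl : DL = G.distLapMatrix := hDLdef
  subst hn
  have hDL := G.distLapMatrix_eq_two_smul_lapMatrix_top_sub hconn hdiam
  have hL : (fun _ => 1) ᵥ* G.lapMatrix ℝ = 0 := G.vecMul_lapMatrix_const_eq_zero
  have hker : ∀ x, G.lapMatrix ℝ *ᵥ x = 0 → ∀ i j, x i = x j :=
    fun _ => hconn.lapMatrix_mulVec_eq_zero_iff.mp
  refine ⟨?_, ?_, fun ν hν₀ hν => ?_⟩
  · rw [SimpleGraph.eigenspace_distLapMatrix_zero hconn hdiam,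
      hconn.finrank_eigenspace_lapMatrix_zero]
  · rw [hDL, SimpleGraph.eigenspace_smul_lapMatrix_top_sub_eq_bot 2 hL hker two_ne_zero,
      finrank_bot]
  · rw [hDL, SimpleGraph.eigenspace_smul_lapMatrix_top_sub 2 hL hν₀ hν]
end
end
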